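/- arXiv:0906.5146 — 2 statements merged into one kernel-verified Lean document; each statement's English description precedes it below -/
import Mathlib

section
/- In a regular frame L, if b is way-below a, then b is well-inside a. Hence in a compact regular frame the way-below and well-inside relations coincide. -/
variable {L : Type*}

def pcompl [Order.Frame L] (y : L) : L := sSup {c | c ⊓ y = ⊥}

def WellInside [Order.Frame L] (b a : L) : Prop := a ⊔ pcompl b = ⊤

def WayBelow [Order.Frame L] (b a : L) : Prop :=
  ∀ U : Set L, a ≤ sSup U → ∃ u : Finset L, ↑u ⊆ U ∧ b ≤ u.sup id

def IsCompactFrame (L : Type*) [Order.Frame L] : Prop :=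
  ∀ U : Set L, sSup U = ⊤ → ∃ u : Finset L, ↑u ⊆ U ∧ u.sup id = ⊤

def IsRegularFrame (L : Type*) [Order.Frame L] : Prop :=
  ∀ a : L, a = sSup {b | WellInside b a}

def IsLocallyCompactFrame (L : Type*) [Order.Frame L] : Prop :=
  ∀ a : L, a = sSup {b | WayBelow b a}

/-!
Regularity writes `a` as the join of the elements well inside it, and this family is closed under
finite joins, so an element way below `a` is below one of them and hence well inside `a` itself.
Conversely, if `a ⊔ bᶜ = ⊤` and `U` covers `a`, then `U ∪ {bᶜ}` covers `⊤`; by compactness a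
finite part does, and since `b` is disjoint from `bᶜ` the finitely many members of `U` in it
already cover `b`.
-/

section Frame

variable [Order.Frame L]

theorem pcompl_eq_compl (y : L) : pcompl y = yᶜ :=
  le_antisymm (sSup_le fun _ hc => le_compl_iff_disjoint_right.2 (disjoint_iff.2 hc))
    (le_sSup (compl_inf_self y))

theorem wellInside_iff {a b : L} : WellInside b a ↔ a ⊔ bᶜ = ⊤ := by
  rw [WellInside, pcompl_eq_compl]

theorem wellInside_bot (a : L) : WellInside ⊥ a := by
  simp [wellInside_iff]

theorem WellInside.sup {a c d : L} (hc : WellInside c a) (hd : WellInside d a) :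
    WellInside (c ⊔ d) a := by
  rw [wellInside_iff] at *
  rw [compl_sup, sup_inf_left, hc, hd, inf_top_eq]

theorem WellInside.mono_left {a b c : L} (hbc : b ≤ c) (h : WellInside c a) : WellInside b a := by
  rw [wellInside_iff] at *
  exact top_unique (h ▸ sup_le_sup_left (compl_anti hbc) a)

theorem wellInside_finset_sup {a : L} {u : Finset L} (hu : ∀ c ∈ u, WellInside c a) :
    WellInside (u.sup id) a :=
  Finset.sup_induction (p := (WellInside · a)) (wellInside_bot a) (fun _ hc _ hd => hc.sup hd) hu

theorem WayBelow.wellInside (hr : IsRegularFrame L) {a b : L} (h : WayBelow b a) :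
    WellInside b a := by
  obtain ⟨u, hu, hbu⟩ := h {c | WellInside c a} (hr a).le
  exact (wellInside_finset_sup hu).mono_left hbu

theorem WellInside.wayBelow (hc : IsCompactFrame L) {a b : L} (h : WellInside b a) :
    WayBelow b a := by
  classical
  intro U haU
  have hcover : sSup (insert bᶜ U) = ⊤ := by
    rw [sSup_insert, sup_comm, eq_top_iff, ← wellInside_iff.1 h]
    exact sup_le_sup_right haU _
  obtain ⟨u, huU, hu⟩ := hc _ hcover
  refine ⟨u.erase bᶜ, fun c hcu' => ?_, ?_⟩
  · obtain ⟨hcb, hcu⟩ := Finset.mem_erase.1 hcu'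
    exact (huU hcu).resolve_left hcb
  · have hb : b ≤ (u.erase bᶜ).sup id ⊔ bᶜ := by
      calc b ≤ u.sup id := hu ▸ le_top
        _ ≤ (insert bᶜ (u.erase bᶜ)).sup id :=
            Finset.sup_mono (Finset.insert_erase_subset _ _)
        _ = (u.erase bᶜ).sup id ⊔ bᶜ := by rw [Finset.sup_insert, id, sup_comm]
    exact Disjoint.left_le_of_le_sup_right hb disjoint_compl_right

end Frame

theorem stmt2 [Order.Frame L] (hr : IsRegularFrame L) :
    (∀ a b : L, WayBelow b a → WellInside b a) ∧
    (IsCompactFrame L → ∀ a b : L, WayBelow b a ↔ WellInside b a) :=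
  ⟨fun _ _ => WayBelow.wellInside hr,
    fun hc _ _ => ⟨WayBelow.wellInside hr, WellInside.wayBelow hc⟩⟩
end

section
/- Every compact regular frame is locally compact (continuous): for every element a, a = ⨆{b : b ≪ a}. -/
variable {L : Type*}

lemma inf_pcompl_eq_bot [Order.Frame L] (b : L) : b ⊓ pcompl b = ⊥ := by
  rw [pcompl, inf_sSup_eq]
  apply le_antisymm _ bot_le
  apply iSup_le; intro c; apply iSup_le; intro hc
  rw [inf_comm]; exact le_of_eq hc

lemma wellInside_wayBelow [Order.Frame L] (hc : IsCompactFrame L) {b a : L}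
    (h : WellInside b a) : WayBelow b a := by
  intro U hU
  have hcov : sSup (U ∪ {pcompl b}) = ⊤ := by
    apply top_unique
    rw [← h]
    apply sup_le
    · exact hU.trans (sSup_le_sSup (Set.subset_union_left))
    · exact le_sSup (Set.mem_union_right _ rfl)
  obtain ⟨u, hu, hsup⟩ := hc _ hcov
  classical
  refine ⟨u.erase (pcompl b), ?_, ?_⟩
  · intro x hx
    simp only [Finset.coe_erase, Set.mem_diff, Set.mem_singleton_iff] at hx
    rcases hu hx.1 with h' | h'
    · exact h'
    · exact absurd h' hx.2
  · calc b = b ⊓ u.sup id := by rw [hsup, inf_top_eq]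
      _ = u.sup (fun x => b ⊓ id x) := Finset.sup_inf_distrib_left _ _ _
      _ ≤ (u.erase (pcompl b)).sup id := ?_
    apply Finset.sup_le
    intro x hx
    by_cases hxb : x = pcompl b
    · subst hxb
      simp [inf_pcompl_eq_bot]
    · exact le_trans inf_le_right (Finset.le_sup (f := id) (Finset.mem_erase.2 ⟨hxb, hx⟩))

theorem stmt3 [Order.Frame L] (hc : IsCompactFrame L) (hr : IsRegularFrame L) :
    IsLocallyCompactFrame L := by
  intro a
  apply le_antisymm
  · conv_lhs => rw [hr a]
    exact sSup_le_sSup (fun b hb => wellInside_wayBelow hc hb)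
  · apply sSup_le
    intro b hb
    obtain ⟨u, hu, hle⟩ := hb {a} (le_sSup rfl)
    exact hle.trans (Finset.sup_le fun x hx => le_of_eq (hu hx))
end
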